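/- Let H ∈ ℂ^{N×K}, N₀ > 0, P ∈ ℂ^{K×K} Hermitian, and set M := Hᴴ(N₀I + HHᴴ)⁻¹H − I and M̃ := P(I+M)P − P. Let F ∈ ℂ^{K×K} be invertible and T ∈ ℂ^{K×K} arbitrary, and for W ∈ ℂ^{K×N} define I_GMI(W,T,F) := log det(I+FᴴF) − Tr(FᴴF) + 2 Re Tr(Fᴴ(WH − TP)) − Tr((I+FᴴF)⁻¹ L₁), where L₁ := FᴴW(N₀I + HHᴴ)WᴴF − FᴴWHPTᴴF − FᴴTPHᴴWᴴF + FᴴTPTᴴF. Set W_opt := F^{−H}(I + FᴴF + FᴴTP)Hᴴ(N₀I + HHᴴ)⁻¹. Then for every W ∈ ℂ^{K×N}, I_GMI(W,T,F) ≤ I_GMI(W_opt,T,F), and I_GMI(W_opt,T,F) = K + log det(I+FᴴF) + Tr(TᴴF(I+FᴴF)⁻¹FᴴT M̃) + Tr(M(I+FᴴF)) + 2 Re Tr(PMFᴴT). -/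

import Mathlib

/-!
As a function of `W`, `I_GMI(W,T,F)` is a concave quadratic. With `Q = F(I+FᴴF)⁻¹Fᴴ ⪰ 0` and
`S = N₀I + HHᴴ ≻ 0`, every solution `W₀` of the normal equation `Q W₀ S = (F + QTP)Hᴴ` gives
`I_GMI(W) = I_GMI(0) + 2 Re Tr(Q W₀ S Wᴴ) − Re Tr(Q W S Wᴴ)`, and `W_opt` is such a solution.
Completing the square, `I_GMI(W_opt) − I_GMI(W) = Re Tr(Q D S Dᴴ) ≥ 0` for `D = W_opt − W`.
The optimal value `I_GMI(0) + Re Tr(Q W_opt S W_optᴴ)` is evaluated through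
`Fᴴ W_opt H = (I + FᴴF + FᴴTP)(I + M)`.
-/

open Matrix
open scoped ComplexOrder

/-- The GMI of the Method I (Forney model) demodulator with parameters `(W, T, F)`:
`I_GMI(W,T,F) = log det(I+FᴴF) − Tr(FᴴF) + 2 Re Tr(Fᴴ(WH − TP)) − Tr((I+FᴴF)⁻¹ L₁)`
with `L₁ = FᴴW(N₀I+HHᴴ)WᴴF − FᴴWHPTᴴF − FᴴTPHᴴWᴴF + FᴴTPTᴴF`. -/
noncomputable def IGMI1 {N K : ℕ} (H : Matrix (Fin N) (Fin K) ℂ) (N₀ : ℝ)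
    (P : Matrix (Fin K) (Fin K) ℂ) (W : Matrix (Fin K) (Fin N) ℂ)
    (T F : Matrix (Fin K) (Fin K) ℂ) : ℝ :=
  (Complex.log ((1 + Fᴴ * F).det)).re - (Matrix.trace (Fᴴ * F)).re
    + 2 * (Matrix.trace (Fᴴ * (W * H - T * P))).re
    - (Matrix.trace ((1 + Fᴴ * F)⁻¹ *
        (Fᴴ * W * ((N₀ : ℂ) • 1 + H * Hᴴ) * Wᴴ * F - Fᴴ * W * H * P * Tᴴ * F
          - Fᴴ * T * P * Hᴴ * Wᴴ * F + Fᴴ * T * P * Tᴴ * F))).re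

namespace Matrix

variable {m n 𝕜 : Type*} [Fintype m] [Fintype n] [RCLike 𝕜]

lemma re_trace_conjTranspose (A : Matrix n n 𝕜) : RCLike.re Aᴴ.trace = RCLike.re A.trace := by
  rw [trace_conjTranspose, RCLike.star_def, RCLike.conj_re]

open scoped MatrixOrder in
lemma PosSemidef.trace_mul_nonneg {A B : Matrix n n 𝕜} (hA : A.PosSemidef) (hB : B.PosSemidef) :
    0 ≤ (A * B).trace := by
  classical
  obtain ⟨R, rfl⟩ := CStarAlgebra.nonneg_iff_eq_star_mul_self.mp hA.nonneg
  rw [star_eq_conjTranspose, Matrix.mul_assoc, trace_mul_comm]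
  exact (hB.mul_mul_conjTranspose_same R).trace_nonneg

lemma re_trace_mul_mul_mul_conjTranspose_comm {Q : Matrix m m 𝕜} {S : Matrix n n 𝕜}
    (hQ : Q.IsHermitian) (hS : S.IsHermitian) (A B : Matrix m n 𝕜) :
    RCLike.re (Q * A * S * Bᴴ).trace = RCLike.re (Q * B * S * Aᴴ).trace := by
  rw [← re_trace_conjTranspose]
  simp only [conjTranspose_mul, conjTranspose_conjTranspose, hQ.eq, hS.eq, Matrix.mul_assoc]
  rw [trace_mul_comm Q]
  simp only [Matrix.mul_assoc]

lemma two_mul_re_trace_sub_le {Q : Matrix m m 𝕜} {S : Matrix n n 𝕜}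
    (hQ : Q.PosSemidef) (hS : S.PosSemidef) (W₀ W : Matrix m n 𝕜) :
    2 * RCLike.re (Q * W₀ * S * Wᴴ).trace - RCLike.re (Q * W * S * Wᴴ).trace
      ≤ RCLike.re (Q * W₀ * S * W₀ᴴ).trace := by
  have hsq : 0 ≤ RCLike.re (Q * (W₀ - W) * S * (W₀ - W)ᴴ).trace := by
    refine (RCLike.nonneg_iff.mp ?_).1
    simpa only [Matrix.mul_assoc] using hQ.trace_mul_nonneg (hS.mul_mul_conjTranspose_same _)
  have hsymm := re_trace_mul_mul_mul_conjTranspose_comm hQ.isHermitian hS.isHermitian W₀ W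
  simp only [conjTranspose_sub, Matrix.mul_sub, Matrix.sub_mul, trace_sub, map_sub] at hsq
  linarith

lemma posDef_one_add_conjTranspose_mul_self [DecidableEq n] (A : Matrix m n 𝕜) :
    (1 + Aᴴ * A).PosDef :=
  PosDef.one.add_posSemidef (posSemidef_conjTranspose_mul_self A)

end Matrix

lemma Complex.re_trace_conjTranspose {n : Type*} [Fintype n] (A : Matrix n n ℂ) :
    Aᴴ.trace.re = A.trace.re := by
  simpa only [RCLike.re_to_complex] using Matrix.re_trace_conjTranspose A

section FrontEnd

variable {N K : ℕ} (H : Matrix (Fin N) (Fin K) ℂ) (N₀ : ℝ) (P T F : Matrix (Fin K) (Fin K) ℂ)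

noncomputable def rxCovariance : Matrix (Fin N) (Fin N) ℂ := (N₀ : ℂ) • 1 + H * Hᴴ

noncomputable def gmiWeight : Matrix (Fin K) (Fin K) ℂ := F * (1 + Fᴴ * F)⁻¹ * Fᴴ

noncomputable def optimalFrontEnd : Matrix (Fin K) (Fin N) ℂ :=
  (Fᴴ)⁻¹ * (1 + Fᴴ * F + Fᴴ * T * P) * Hᴴ * (rxCovariance H N₀)⁻¹

variable {N₀} in
lemma posDef_rxCovariance (hN₀ : 0 < N₀) : (rxCovariance H N₀).PosDef := by
  refine PosDef.add_posSemidef ?_ (posSemidef_self_mul_conjTranspose H)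
  rw [smul_one_eq_diagonal]
  exact posDef_diagonal_iff.mpr fun _ => Complex.zero_lt_real.mpr hN₀

lemma posSemidef_gmiWeight : (gmiWeight F).PosSemidef :=
  (posDef_one_add_conjTranspose_mul_self F).inv.posSemidef.mul_mul_conjTranspose_same F

variable {F} in
lemma conjTranspose_mul_optimalFrontEnd (hF : IsUnit F) :
    Fᴴ * optimalFrontEnd H N₀ P T F
      = (1 + Fᴴ * F + Fᴴ * T * P) * Hᴴ * (rxCovariance H N₀)⁻¹ := by
  have hFinv : Fᴴ * (Fᴴ)⁻¹ = 1 :=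
    mul_nonsing_inv _ ((isUnit_iff_isUnit_det _).mp hF.star)
  simp only [optimalFrontEnd, ← Matrix.mul_assoc, hFinv, Matrix.one_mul]

variable {N₀ F} in
/-- The normal equation of the maximisation over `W`. -/
lemma gmiWeight_mul_optimalFrontEnd_mul (hN₀ : 0 < N₀) (hF : IsUnit F) :
    gmiWeight F * optimalFrontEnd H N₀ P T F * rxCovariance H N₀
      = (F + gmiWeight F * T * P) * Hᴴ := by
  have hG := (isUnit_iff_isUnit_det _).mp (posDef_one_add_conjTranspose_mul_self F).isUnit
  have hS := (isUnit_iff_isUnit_det _).mp (posDef_rxCovariance H hN₀).isUnit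
  calc gmiWeight F * optimalFrontEnd H N₀ P T F * rxCovariance H N₀
      = F * (1 + Fᴴ * F)⁻¹ * (Fᴴ * optimalFrontEnd H N₀ P T F) * rxCovariance H N₀ := by
        simp only [gmiWeight, Matrix.mul_assoc]
    _ = F * ((1 + Fᴴ * F)⁻¹ * (1 + Fᴴ * F + Fᴴ * T * P)) * Hᴴ
          * ((rxCovariance H N₀)⁻¹ * rxCovariance H N₀) := by
        rw [conjTranspose_mul_optimalFrontEnd H N₀ P T hF]
        simp only [Matrix.mul_assoc]
    _ = (F + gmiWeight F * T * P) * Hᴴ := by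
        rw [nonsing_inv_mul _ hS, Matrix.mul_add, nonsing_inv_mul _ hG]
        simp only [gmiWeight, Matrix.mul_add, Matrix.add_mul, Matrix.mul_one, Matrix.mul_assoc]

variable {H N₀ P T F}

lemma trace_gmiWeight_mul_of_normal_eq {W₀ : Matrix (Fin K) (Fin N) ℂ}
    (hW₀ : gmiWeight F * W₀ * rxCovariance H N₀ = (F + gmiWeight F * T * P) * Hᴴ)
    (W : Matrix (Fin K) (Fin N) ℂ) :
    (gmiWeight F * W₀ * rxCovariance H N₀ * Wᴴ).trace
      = (Fᴴ * W * H)ᴴ.trace + ((1 + Fᴴ * F)⁻¹ * (Fᴴ * T * P * (Fᴴ * W * H)ᴴ)).trace := by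
  rw [hW₀]
  simp only [gmiWeight, conjTranspose_mul, conjTranspose_conjTranspose, Matrix.add_mul,
    trace_add, Matrix.mul_assoc]
  rw [trace_mul_comm F, trace_mul_comm F]
  simp only [Matrix.mul_assoc]

lemma IGMI1_zero : IGMI1 H N₀ P 0 T F
    = (Complex.log ((1 + Fᴴ * F).det)).re - (Fᴴ * F).trace.re - 2 * (Fᴴ * T * P).trace.re
      - ((1 + Fᴴ * F)⁻¹ * (Fᴴ * T * P * Tᴴ * F)).trace.re := by
  simp only [IGMI1, Matrix.mul_zero, Matrix.zero_mul, conjTranspose_zero, zero_sub, sub_zero,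
    zero_add, Matrix.mul_neg, trace_neg, Complex.neg_re, Matrix.mul_assoc]
  ring

theorem IGMI1_eq_of_normal_eq (hP : P.IsHermitian) {W₀ : Matrix (Fin K) (Fin N) ℂ}
    (hW₀ : gmiWeight F * W₀ * rxCovariance H N₀ = (F + gmiWeight F * T * P) * Hᴴ)
    (W : Matrix (Fin K) (Fin N) ℂ) :
    IGMI1 H N₀ P W T F = IGMI1 H N₀ P 0 T F
      + 2 * (gmiWeight F * W₀ * rxCovariance H N₀ * Wᴴ).trace.re
      - (gmiWeight F * W * rxCovariance H N₀ * Wᴴ).trace.re := by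
  have hGinv : ((1 + Fᴴ * F)⁻¹).IsHermitian :=
    (posDef_one_add_conjTranspose_mul_self F).isHermitian.inv
  have quadratic : (gmiWeight F * W * rxCovariance H N₀ * Wᴴ).trace
      = ((1 + Fᴴ * F)⁻¹ * (Fᴴ * W * ((N₀ : ℂ) • 1 + H * Hᴴ) * Wᴴ * F)).trace := by
    simp only [gmiWeight, rxCovariance, Matrix.mul_assoc]
    rw [trace_mul_comm F]
    simp only [Matrix.mul_assoc]
  have cross : ((1 + Fᴴ * F)⁻¹ * (Fᴴ * (T * (P * (Hᴴ * (Wᴴ * F)))))).trace.re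
      = ((1 + Fᴴ * F)⁻¹ * (Fᴴ * (W * (H * (P * (Tᴴ * F)))))).trace.re := by
    rw [← Complex.re_trace_conjTranspose]
    simp only [conjTranspose_mul, conjTranspose_conjTranspose, hP.eq, hGinv.eq, Matrix.mul_assoc]
    rw [trace_mul_comm (1 + Fᴴ * F)⁻¹]
    simp only [Matrix.mul_assoc]
  rw [trace_gmiWeight_mul_of_normal_eq hW₀, quadratic, Complex.add_re,
    Complex.re_trace_conjTranspose, IGMI1_zero]
  simp only [IGMI1, Matrix.mul_sub, Matrix.mul_add, trace_sub, trace_add, Complex.sub_re,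
    Complex.add_re, conjTranspose_mul, conjTranspose_conjTranspose, Matrix.mul_assoc, cross]
  ring

lemma re_trace_gmiWeight_mul_self_of_normal_eq (hP : P.IsHermitian)
    {M : Matrix (Fin K) (Fin K) ℂ} (hM : M.IsHermitian) {W₀ : Matrix (Fin K) (Fin N) ℂ}
    (hW₀ : gmiWeight F * W₀ * rxCovariance H N₀ = (F + gmiWeight F * T * P) * Hᴴ)
    (hW₀H : Fᴴ * W₀ * H = (1 + Fᴴ * F + Fᴴ * T * P) * (1 + M)) :
    (gmiWeight F * W₀ * rxCovariance H N₀ * W₀ᴴ).trace.re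
      = K + (Fᴴ * F).trace.re + 2 * (Fᴴ * T * P).trace.re + (M * (1 + Fᴴ * F)).trace.re
        + 2 * (P * M * Fᴴ * T).trace.re
        + ((1 + Fᴴ * F)⁻¹ * (Fᴴ * T * (P * (1 + M) * P) * Tᴴ * F)).trace.re := by
  set G := 1 + Fᴴ * F with hG
  have hGpos : G.PosDef := posDef_one_add_conjTranspose_mul_self F
  have hGinv : G * G⁻¹ = 1 := mul_nonsing_inv _ ((isUnit_iff_isUnit_det _).mp hGpos.isUnit)
  have hX : (Fᴴ * W₀ * H)ᴴ = (1 + M) * (G + P * Tᴴ * F) := by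
    rw [hW₀H, conjTranspose_mul, conjTranspose_add, conjTranspose_add, conjTranspose_one, hM.eq,
      hGpos.isHermitian.eq]
    simp only [conjTranspose_mul, conjTranspose_conjTranspose, hP.eq, Matrix.mul_assoc]
  have hUM : (Fᴴ * T * P * M).trace = (P * M * Fᴴ * T).trace := by
    rw [Matrix.mul_assoc _ P M, trace_mul_comm]
    simp only [Matrix.mul_assoc]
  have linear : (Fᴴ * W₀ * H)ᴴ.trace.re
      = K + (Fᴴ * F).trace.re + (M * G).trace.re + (Fᴴ * T * P).trace.re
        + (P * M * Fᴴ * T).trace.re := by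
    have hGtr : G.trace.re = K + (Fᴴ * F).trace.re := by simp [hG, trace_add]
    rw [Complex.re_trace_conjTranspose, hW₀H]
    simp only [Matrix.add_mul, Matrix.mul_add, Matrix.mul_one, trace_add, Complex.add_re, hUM,
      trace_mul_comm _ M]
    linarith
  have quadratic : (G⁻¹ * (Fᴴ * T * P * (Fᴴ * W₀ * H)ᴴ)).trace
      = (Fᴴ * T * P).trace + (P * M * Fᴴ * T).trace
        + (G⁻¹ * (Fᴴ * T * (P * (1 + M) * P) * Tᴴ * F)).trace := by
    calc (G⁻¹ * (Fᴴ * T * P * (Fᴴ * W₀ * H)ᴴ)).trace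
        = (G⁻¹ * (Fᴴ * T * P * (1 + M)) * G).trace
          + (G⁻¹ * (Fᴴ * T * (P * (1 + M) * P) * Tᴴ * F)).trace := by
          rw [hX, Matrix.mul_add (1 + M), Matrix.mul_add, Matrix.mul_add, trace_add]
          simp only [Matrix.mul_assoc]
      _ = (Fᴴ * T * P * (1 + M)).trace
          + (G⁻¹ * (Fᴴ * T * (P * (1 + M) * P) * Tᴴ * F)).trace := by
          rw [trace_mul_cycle, ← Matrix.mul_assoc, hGinv, Matrix.one_mul]
      _ = _ := by
          rw [Matrix.mul_add, Matrix.mul_one, trace_add, hUM]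
  rw [trace_gmiWeight_mul_of_normal_eq hW₀ W₀, Complex.add_re, linear, quadratic]
  simp only [Complex.add_re]
  ring

theorem IGMI1_optimal_value (hP : P.IsHermitian) {M : Matrix (Fin K) (Fin K) ℂ}
    (hM : M.IsHermitian) {W₀ : Matrix (Fin K) (Fin N) ℂ}
    (hW₀ : gmiWeight F * W₀ * rxCovariance H N₀ = (F + gmiWeight F * T * P) * Hᴴ)
    (hW₀H : Fᴴ * W₀ * H = (1 + Fᴴ * F + Fᴴ * T * P) * (1 + M)) :
    IGMI1 H N₀ P W₀ T F
      = K + (Complex.log ((1 + Fᴴ * F).det)).re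
        + (Tᴴ * F * (1 + Fᴴ * F)⁻¹ * Fᴴ * T * (P * (1 + M) * P - P)).trace.re
        + (M * (1 + Fᴴ * F)).trace.re
        + 2 * (P * M * Fᴴ * T).trace.re := by
  have rotate (Y : Matrix (Fin K) (Fin K) ℂ) :
      (Tᴴ * F * (1 + Fᴴ * F)⁻¹ * Fᴴ * T * Y).trace
        = ((1 + Fᴴ * F)⁻¹ * (Fᴴ * T * Y * Tᴴ * F)).trace := by
    simp only [Matrix.mul_assoc]
    rw [trace_mul_comm Tᴴ]
    simp only [Matrix.mul_assoc]
    rw [trace_mul_comm F]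
    simp only [Matrix.mul_assoc]
  rw [IGMI1_eq_of_normal_eq hP hW₀ W₀, re_trace_gmiWeight_mul_self_of_normal_eq hP hM hW₀ hW₀H,
    IGMI1_zero, rotate, Matrix.mul_sub, Matrix.sub_mul, Matrix.sub_mul, Matrix.mul_sub, trace_sub,
    Complex.sub_re]
  ring

end FrontEnd

/-- front-end-filter part of Proposition 1, Method I. The GMI is maximized
over `W` by `W_opt = F⁻ᴴ(I + FᴴF + FᴴTP)Hᴴ(N₀I+HHᴴ)⁻¹`, with the stated optimal value. -/
theorem gmi_method1_frontend {N K : ℕ} (H : Matrix (Fin N) (Fin K) ℂ)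
    (N₀ : ℝ) (hN₀ : 0 < N₀)
    (P : Matrix (Fin K) (Fin K) ℂ) (hP : P.IsHermitian)
    (M : Matrix (Fin K) (Fin K) ℂ)
    (hM : M = Hᴴ * ((N₀ : ℂ) • 1 + H * Hᴴ)⁻¹ * H - 1)
    (Mt : Matrix (Fin K) (Fin K) ℂ) (hMt : Mt = P * (1 + M) * P - P)
    (F : Matrix (Fin K) (Fin K) ℂ) (hF : IsUnit F)
    (T : Matrix (Fin K) (Fin K) ℂ)
    (Wopt : Matrix (Fin K) (Fin N) ℂ)
    (hWopt : Wopt = (Fᴴ)⁻¹ * (1 + Fᴴ * F + Fᴴ * T * P) * Hᴴ * ((N₀ : ℂ) • 1 + H * Hᴴ)⁻¹) :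
    (∀ W : Matrix (Fin K) (Fin N) ℂ, IGMI1 H N₀ P W T F ≤ IGMI1 H N₀ P Wopt T F) ∧
      IGMI1 H N₀ P Wopt T F
        = K + (Complex.log ((1 + Fᴴ * F).det)).re
          + (Matrix.trace (Tᴴ * F * (1 + Fᴴ * F)⁻¹ * Fᴴ * T * Mt)).re
          + (Matrix.trace (M * (1 + Fᴴ * F))).re
          + 2 * (Matrix.trace (P * M * Fᴴ * T)).re := by
  replace hWopt : Wopt = optimalFrontEnd H N₀ P T F := hWopt
  have hS := posDef_rxCovariance H hN₀
  have hnormal : gmiWeight F * Wopt * rxCovariance H N₀ = (F + gmiWeight F * T * P) * Hᴴ :=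
    hWopt ▸ gmiWeight_mul_optimalFrontEnd_mul H P T hN₀ hF
  refine ⟨fun W => ?_, ?_⟩
  · have hsq := two_mul_re_trace_sub_le (posSemidef_gmiWeight F) hS.posSemidef Wopt W
    simp only [RCLike.re_to_complex] at hsq
    rw [IGMI1_eq_of_normal_eq hP hnormal W, IGMI1_eq_of_normal_eq hP hnormal Wopt]
    linarith
  · have hMherm : M.IsHermitian := by
      rw [hM]
      exact (isHermitian_conjTranspose_mul_mul H hS.isHermitian.inv).sub isHermitian_one
    have hWoptH : Fᴴ * Wopt * H = (1 + Fᴴ * F + Fᴴ * T * P) * (1 + M) := by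
      rw [hWopt, conjTranspose_mul_optimalFrontEnd H N₀ P T hF, hM, add_sub_cancel]
      simp only [rxCovariance, Matrix.mul_assoc]
    rw [hMt]
    exact IGMI1_optimal_value hP hMherm hnormal hWoptH
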